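/- Consider the semilinear evolution equation ẋ(t)=Ax(t)+f(t,x(t),u(t)) on a Banach space X, where A generates an exponentially stable C0-semigroup T(·), i.e. ‖T(t)‖ ≤ Me^{−λt} for some M≥1 and λ>0, and f satisfies the generalized bilinear bound ‖f(t,ξ,μ)‖ ≤ (K‖ξ‖+d)γ(‖μ‖) for all t≥0, ξ∈X, μ∈Uv, where K,d≥0 and γ∈K∞. Then every mild solution x:[t0,t_max)→X with initial datum x(t0)=x0 and piecewise continuous input u satisfies, for all τ∈[t0,t_max), the a priori bound ‖x(τ)‖ ≤ M[‖x0‖ + d∫_{t0}^{τ} γ(‖u(s)‖)ds] · exp(MK∫_{t0}^{τ} γ(‖u(s)‖)ds). -/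

import Mathlib

/-! With `g = γ(‖u(·)‖)`, the variation-of-constants formula and `‖T(t)‖ ≤ M` give
`‖x(t)‖ ≤ M‖x₀‖ + ∫_{t₀}^t g(s) (Md + MK‖x(s)‖) ds`. Call the right-hand side `Φ` and put
`G = ∫_{t₀}^t g`. Since `‖x‖ ≤ Φ`, the right derivative of `Φ e^{-MKG}` is at most `Md g`, so
`Φ e^{-MKG} ≤ M‖x₀‖ + MdG`: this is Gronwall's inequality with weight `g`. Piecewise continuity
of `u` makes `g` locally integrable and right-continuous, which is all the right-derivative
comparison needs. -/

open Set Filter MeasureTheory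

/-- A function of class `K`. -/
def ClassK (α : ℝ → ℝ) : Prop :=
  ContinuousOn α (Ici 0) ∧ StrictMonoOn α (Ici 0) ∧ α 0 = 0

/-- A function of class `K∞`. -/
def ClassKInf (α : ℝ → ℝ) : Prop := ClassK α ∧ Tendsto α atTop atTop

/-- A function of class `KL`. -/
def ClassKL (β : ℝ → ℝ → ℝ) : Prop :=
  (∀ t ≥ (0:ℝ), ClassK (fun r => β r t)) ∧
  (∀ r ≥ (0:ℝ), AntitoneOn (fun t => β r t) (Ici 0) ∧
    Tendsto (fun t => β r t) atTop (nhds 0))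

/-- A strongly continuous semigroup of bounded linear operators on `X`. -/
structure C0Semigroup (X : Type*) [NormedAddCommGroup X] [NormedSpace ℝ X] where
  T : ℝ → X →L[ℝ] X
  map_zero : T 0 = ContinuousLinearMap.id ℝ X
  map_add : ∀ s t : ℝ, 0 ≤ s → 0 ≤ t → T (s + t) = (T s).comp (T t)
  strong_cont : ∀ x : X, ContinuousOn (fun t => T t x) (Ici 0)

variable {X Uv : Type*} [NormedAddCommGroup X] [NormedSpace ℝ X] [CompleteSpace X]
  [NormedAddCommGroup Uv] [NormedSpace ℝ Uv]

/-- A piecewise continuous function `u : [0,∞) → Uv`. -/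
def PWCont (u : ℝ → Uv) : Prop :=
  ∃ σ : ℕ → ℝ, σ 0 = 0 ∧ StrictMono σ ∧ Tendsto σ atTop atTop ∧
    ∀ k : ℕ, ∃ v : ℝ → Uv, ContinuousOn v (Icc (σ k) (σ (k + 1))) ∧
      ∀ t ∈ Ico (σ k) (σ (k + 1)), u t = v t

/-- Condition (SL1): `f` is piecewise continuous in `t` and continuous in its other
variables. -/
def CondSL1 (f : ℝ → X → Uv → X) : Prop :=
  ∃ σ : ℕ → ℝ, σ 0 = 0 ∧ StrictMono σ ∧ Tendsto σ atTop atTop ∧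
    ∀ k : ℕ, ∃ g : ℝ → X → Uv → X,
      ContinuousOn (fun p : ℝ × X × Uv => g p.1 p.2.1 p.2.2)
        {p : ℝ × X × Uv | p.1 ∈ Icc (σ k) (σ (k + 1))} ∧
      ∀ t ∈ Ico (σ k) (σ (k + 1)), ∀ (ξ : X) (μ : Uv), f t ξ μ = g t ξ μ

/-- `L` is a Lipschitz constant for `f(t, ·, μ)` on the ball of radius `r`, uniformly in
`t ≥ 0` and in `‖μ‖ ≤ r`. -/
def CondSL2With (f : ℝ → X → Uv → X) (r L : ℝ) : Prop :=
  ∀ t ≥ (0:ℝ), ∀ (ξ ω : X) (μ : Uv), ‖ξ‖ ≤ r → ‖ω‖ ≤ r → ‖μ‖ ≤ r →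
    ‖f t ξ μ - f t ω μ‖ ≤ L * ‖ξ - ω‖

/-- Condition (SL2): `f(t,ξ,μ)` is Lipschitz in `ξ` on bounded sets, uniformly in `t` and
for `μ` in bounded sets. -/
def CondSL2 (f : ℝ → X → Uv → X) : Prop :=
  ∀ r > (0:ℝ), ∃ L, 0 ≤ L ∧ CondSL2With f r L

/-- Condition (SL3), with the bound witnessed by `γ ∈ K∞` and a nondecreasing
`N : [0,∞) → (0,∞)`. -/
def CondSL3With (f : ℝ → X → Uv → X) (γ N : ℝ → ℝ) : Prop :=
  ClassKInf γ ∧ MonotoneOn N (Ici 0) ∧ (∀ r ≥ (0:ℝ), 0 < N r) ∧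
    ∀ t ≥ (0:ℝ), ∀ (ξ : X) (μ : Uv), ‖f t ξ μ‖ ≤ N ‖ξ‖ * (1 + γ ‖μ‖)

/-- Condition (SL3). -/
def CondSL3 (f : ℝ → X → Uv → X) : Prop := ∃ γ N, CondSL3With f γ N

/-- Condition (SL4): continuity in the input at the zero input, uniformly in time and on
bounded sets of states. -/
def CondSL4 (f : ℝ → X → Uv → X) : Prop :=
  ∀ r > (0:ℝ), ∀ ε > (0:ℝ), ∃ δ > (0:ℝ),
    ∀ t ≥ (0:ℝ), ∀ (ξ : X) (μ : Uv), ‖ξ‖ ≤ r → ‖μ‖ ≤ δ →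
      ‖f t ξ μ - f t ξ 0‖ < ε

/-- `x` is a mild (weak) solution of `ẋ = Ax + f(t,x,u(t))` on the interval `[t0, T]`. -/
def IsMild (Tg : C0Semigroup X) (f : ℝ → X → Uv → X) (u : ℝ → Uv)
    (t0 T : ℝ) (x : ℝ → X) : Prop :=
  ContinuousOn x (Icc t0 T) ∧
    ∀ t ∈ Icc t0 T,
      x t = Tg.T (t - t0) (x t0) + ∫ s in t0..t, Tg.T (t - s) (f s (x s) (u s))

open Real Topology

theorem ClassK.nonneg {α : ℝ → ℝ} (hα : ClassK α) {r : ℝ} (hr : 0 ≤ r) : 0 ≤ α r :=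
  hα.2.2 ▸ hα.2.1.monotoneOn self_mem_Ici hr hr

theorem le_of_le_mul_exp_neg {a M lam t : ℝ} (ha : 0 ≤ a) (hlam : 0 ≤ lam) (ht : 0 ≤ t)
    (h : a ≤ M * exp (-lam * t)) : a ≤ M := by
  have hM : 0 ≤ M := nonneg_of_mul_nonneg_left (ha.trans h) (exp_pos _)
  calc a ≤ M * exp (-lam * t) := h
    _ ≤ M * 1 := by gcongr; exact exp_le_one_iff.2 (by nlinarith)
    _ = M := mul_one M

theorem exists_mem_Ico_of_tendsto_atTop {σ : ℕ → ℝ} (hmono : StrictMono σ)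
    (hσ : Tendsto σ atTop atTop) {x : ℝ} (hx : σ 0 ≤ x) : ∃ k, x ∈ Ico (σ k) (σ (k + 1)) := by
  have hcover := iUnion_Ico_map_succ_eq_Ici (fun k => hmono.monotone (Nat.zero_le k))
    (not_bddAbove_of_tendsto_atTop hσ)
  have hx' : x ∈ ⋃ k, Ico (σ k) (σ (Order.succ k)) := hcover ▸ hx
  simpa using hx'

namespace PWCont

variable {Uv : Type*} [NormedAddCommGroup Uv] {u : ℝ → Uv}

theorem continuousWithinAt_Ici (hu : PWCont u) {x : ℝ} (hx : 0 ≤ x) :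
    ContinuousWithinAt u (Ici x) x := by
  obtain ⟨σ, hσ0, hmono, hσ, hpieces⟩ := hu
  obtain ⟨k, hk⟩ := exists_mem_Ico_of_tendsto_atTop hmono hσ (hσ0.symm ▸ hx)
  obtain ⟨v, hv, huv⟩ := hpieces k
  have hpiece : Ico (σ k) (σ (k + 1)) ∈ 𝓝[≥] x := Ico_mem_nhdsGE_of_mem hk
  refine ((hv x (Ico_subset_Icc_self hk)).mono_of_mem_nhdsWithin
    (mem_of_superset hpiece Ico_subset_Icc_self)).congr_of_eventuallyEq ?_ (huv x hk)
  exact eventually_of_mem hpiece huv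

theorem intervalIntegrable {E : Type*} [NormedAddCommGroup E] (hu : PWCont u) {φ : Uv → E}
    (hφ : Continuous φ) {a b : ℝ} (ha : 0 ≤ a) (hab : a ≤ b) :
    IntervalIntegrable (fun s => φ (u s)) volume a b := by
  obtain ⟨σ, hσ0, hmono, hσ, hpieces⟩ := hu
  have hpiece : ∀ k, IntegrableOn (fun s => φ (u s)) (Ico (σ k) (σ (k + 1))) := fun k => by
    obtain ⟨v, hv, huv⟩ := hpieces k
    exact ((hφ.comp_continuousOn hv).integrableOn_Icc.mono_set Ico_subset_Icc_self).congr_fun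
      (fun s hs => by simp only [Function.comp_apply, huv s hs]) measurableSet_Ico
  have hinit : ∀ n, IntegrableOn (fun s => φ (u s)) (Ico (σ 0) (σ n)) := fun n => by
    induction n with
    | zero => simp
    | succ n ih =>
      rw [← Ico_union_Ico_eq_Ico (hmono.monotone n.zero_le) (hmono.monotone n.le_succ)]
      exact ih.union (hpiece n)
  obtain ⟨n, hn⟩ := (hσ.eventually_gt_atTop b).exists
  rw [intervalIntegrable_iff_integrableOn_Icc_of_le hab]
  exact (hinit n).mono_set fun s hs => ⟨hσ0 ▸ ha.trans hs.1, hs.2.trans_lt hn⟩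

end PWCont

theorem IntervalIntegrable.hasDerivWithinAt_integral_Ici {E : Type*} [NormedAddCommGroup E]
    [NormedSpace ℝ E] [CompleteSpace E] {f : ℝ → E} {a b z : ℝ}
    (hf : IntervalIntegrable f volume a b) (hz : z ∈ Ico a b)
    (hcont : ContinuousWithinAt f (Ici z) z) :
    HasDerivWithinAt (fun t => ∫ s in a..t, f s) (f z) (Ici z) z := by
  have hab : a ≤ b := hz.1.trans hz.2.le
  have hIcc := (intervalIntegrable_iff_integrableOn_Icc_of_le hab).1 hf
  refine intervalIntegral.integral_hasDerivWithinAt_right (t := Ioi z)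
    ((intervalIntegrable_iff_integrableOn_Icc_of_le hz.1).2
      (hIcc.mono_set (Icc_subset_Icc_right hz.2.le))) ?_ (hcont.mono Ioi_subset_Ici_self)
  exact ⟨Ioo z b, Ioo_mem_nhdsGT hz.2,
    (hIcc.mono_set fun s hs => ⟨hz.1.trans hs.1.le, hs.2.le⟩).aestronglyMeasurable⟩

theorem le_mul_exp_integral_of_le_add_integral {g y : ℝ → ℝ} {t0 T a b c : ℝ}
    (hg : IntervalIntegrable g volume t0 T) (hg_nonneg : ∀ s ∈ Icc t0 T, 0 ≤ g s)
    (hg_right : ∀ s ∈ Ico t0 T, ContinuousWithinAt g (Ici s) s)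
    (hy : ContinuousOn y (Icc t0 T)) (ha : 0 ≤ a) (hb : 0 ≤ b)
    (hle : ∀ t ∈ Icc t0 T, y t ≤ c + ∫ s in t0..t, g s * (a + b * y s))
    {t : ℝ} (ht : t ∈ Icc t0 T) :
    y t ≤ (c + a * ∫ s in t0..t, g s) * exp (b * ∫ s in t0..t, g s) := by
  set G : ℝ → ℝ := fun t => ∫ s in t0..t, g s
  set Φ : ℝ → ℝ := fun t => c + ∫ s in t0..t, g s * (a + b * y s)
  have hT : t0 ≤ T := ht.1.trans ht.2
  have hgy : IntervalIntegrable (fun s => g s * (a + b * y s)) volume t0 T :=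
    hg.mul_continuousOn (by rw [uIcc_of_le hT]; fun_prop)
  have hG : ContinuousOn G (Icc t0 T) := by
    simpa [uIcc_of_le hT] using intervalIntegral.continuousOn_primitive_interval' hg left_mem_uIcc
  have hΦ : ContinuousOn Φ (Icc t0 T) := by
    simpa [uIcc_of_le hT] using
      (intervalIntegral.continuousOn_primitive_interval' hgy left_mem_uIcc).const_add c
  have hG' : ∀ z ∈ Ico t0 T, HasDerivWithinAt G (g z) (Ici z) z := fun z hz =>
    hg.hasDerivWithinAt_integral_Ici hz (hg_right z hz)
  have hΦ' : ∀ z ∈ Ico t0 T, HasDerivWithinAt Φ (g z * (a + b * y z)) (Ici z) z :=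
    fun z hz => by
      have hyz : ContinuousWithinAt y (Ici z) z :=
        (hy z (Ico_subset_Icc_self hz)).mono_of_mem_nhdsWithin (Icc_mem_nhdsGE_of_mem hz)
      exact (hgy.hasDerivWithinAt_integral_Ici hz
        ((hg_right z hz).mul (continuousWithinAt_const.add
          (continuousWithinAt_const.mul hyz)))).const_add c
  have hG_nonneg : ∀ z ∈ Icc t0 T, 0 ≤ G z := fun z hz =>
    intervalIntegral.integral_nonneg hz.1 fun s hs => hg_nonneg s ⟨hs.1, hs.2.trans hz.2⟩
  have hcompare : Φ t * exp (-(b * G t)) ≤ c + a * G t := by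
    refine image_le_of_deriv_right_le_deriv_boundary (B := fun t => c + a * G t)
      (hΦ.mul (by fun_prop)) (fun z hz => (hΦ' z hz).mul ((hG' z hz).const_mul b).neg.exp)
      (by simp [Φ, G]) (by fun_prop) (fun z hz => ((hG' z hz).const_mul a).const_add c) (fun z hz => ?_) ht
    have hgz := hg_nonneg z (Ico_subset_Icc_self hz)
    have he : exp (-(b * G z)) ≤ 1 :=
      exp_le_one_iff.2 (neg_nonpos.2 (mul_nonneg hb (hG_nonneg z (Ico_subset_Icc_self hz))))
    have hyΦ : y z ≤ Φ z := hle z (Ico_subset_Icc_self hz)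
    calc g z * (a + b * y z) * exp (-(b * G z)) + Φ z * (exp (-(b * G z)) * -(b * g z))
        = exp (-(b * G z)) * (g z * a) + exp (-(b * G z)) * g z * b * (y z - Φ z) := by ring
      _ ≤ exp (-(b * G z)) * (g z * a) + 0 := by
          gcongr
          exact mul_nonpos_of_nonneg_of_nonpos (by positivity) (sub_nonpos.2 hyΦ)
      _ ≤ a * g z := by
          rw [add_zero, mul_comm a]
          exact mul_le_of_le_one_left (mul_nonneg hgz ha) he
  rw [exp_neg, ← div_eq_mul_inv, div_le_iff₀ (exp_pos _)] at hcompare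
  exact (hle t ht).trans hcompare

theorem IsMild.norm_le {X Uv : Type*} [NormedAddCommGroup X] [NormedSpace ℝ X]
    [NormedAddCommGroup Uv] {Tg : C0Semigroup X} {f : ℝ → X → Uv → X} {u : ℝ → Uv}
    {t0 T t M : ℝ} {x : ℝ → X} {F : ℝ → ℝ} (hmild : IsMild Tg f u t0 T x)
    (hTM : ∀ t ≥ (0:ℝ), ‖Tg.T t‖ ≤ M) (hF : IntervalIntegrable F volume t0 t)
    (hfF : ∀ s ∈ Ioc t0 t, ‖f s (x s) (u s)‖ ≤ F s) (ht : t ∈ Icc t0 T) :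
    ‖x t‖ ≤ M * ‖x t0‖ + M * ∫ s in t0..t, F s := by
  have hM : 0 ≤ M := (norm_nonneg _).trans (hTM 0 le_rfl)
  rw [hmild.2 t ht, ← intervalIntegral.integral_const_mul]
  refine (norm_add_le _ _).trans
    (add_le_add (ContinuousLinearMap.le_of_opNorm_le _ (hTM _ (sub_nonneg.2 ht.1)) _) ?_)
  refine intervalIntegral.norm_integral_le_of_norm_le ht.1 (ae_of_all _ fun s hs => ?_)
    (hF.const_mul M)
  exact (ContinuousLinearMap.le_of_opNorm_le _ (hTM _ (sub_nonneg.2 hs.2)) _).trans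
    (mul_le_mul_of_nonneg_left (hfF s hs) hM)

theorem bilinear_apriori_bound_general (Tg : C0Semigroup X) (f : ℝ → X → Uv → X)
    (M lam : ℝ) (hlam : 0 < lam)
    (hT : ∀ t ≥ (0:ℝ), ‖Tg.T t‖ ≤ M * Real.exp (-lam * t))
    (K d : ℝ) (hK : 0 ≤ K) (hd : 0 ≤ d) (γ : ℝ → ℝ) (hγ : ClassKInf γ)
    (hbound : ∀ t ≥ (0:ℝ), ∀ (ξ : X) (μ : Uv), ‖f t ξ μ‖ ≤ (K * ‖ξ‖ + d) * γ ‖μ‖) :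
    ∀ t0 ≥ (0:ℝ), ∀ u : ℝ → Uv, PWCont u → ∀ T ≥ t0, ∀ x : ℝ → X,
      IsMild Tg f u t0 T x →
      ∀ t ∈ Icc t0 T,
        ‖x t‖ ≤ M * (‖x t0‖ + d * ∫ s in t0..t, γ ‖u s‖) *
          Real.exp (M * K * ∫ s in t0..t, γ ‖u s‖) := by
  intro t0 ht0 u hu T hT0 x hmild t ht
  have hγc : Continuous fun μ : Uv => γ ‖μ‖ :=
    hγ.1.1.comp_continuous continuous_norm fun μ => norm_nonneg μ
  have hg : IntervalIntegrable (fun s => γ ‖u s‖) volume t0 T :=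
    hu.intervalIntegrable hγc ht0 hT0
  have hTM : ∀ t ≥ (0:ℝ), ‖Tg.T t‖ ≤ M := fun t ht =>
    le_of_le_mul_exp_neg (norm_nonneg _) hlam.le ht (hT t ht)
  have hM : 0 ≤ M := (norm_nonneg _).trans (hTM 0 le_rfl)
  have hmild_bound : ∀ r ∈ Icc t0 T,
      ‖x r‖ ≤ M * ‖x t0‖ + ∫ s in t0..r, γ ‖u s‖ * (M * d + M * K * ‖x s‖) := by
    intro r hr
    have hF : IntervalIntegrable (fun s => (K * ‖x s‖ + d) * γ ‖u s‖) volume t0 r :=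
      (hg.mono_set (uIcc_subset_uIcc left_mem_uIcc (Icc_subset_uIcc hr))).continuousOn_mul
        (((hmild.1.mono (by rw [uIcc_of_le hr.1]; exact Icc_subset_Icc_right hr.2)).norm.const_mul
          K).add continuousOn_const)
    refine (hmild.norm_le hTM hF (fun s hs => hbound s (ht0.trans hs.1.le) _ _) hr).trans_eq ?_
    rw [← intervalIntegral.integral_const_mul]
    congr 1
    exact intervalIntegral.integral_congr fun s _ => by ring
  refine (le_mul_exp_integral_of_le_add_integral hg (fun s _ => hγ.1.nonneg (norm_nonneg _))
    (fun s hs => hγc.continuousAt.comp_continuousWithinAt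
      (hu.continuousWithinAt_Ici (ht0.trans hs.1))) hmild.1.norm (mul_nonneg hM hd)
    (mul_nonneg hM hK) hmild_bound ht).trans_eq ?_
  ring

/-- The a priori bound in the proof of Theorem 5.7: for a semilinear system with an
exponentially stable semigroup (`‖T(t)‖ ≤ M e^{-λt}`) and the generalized bilinear bound
`‖f(t,ξ,μ)‖ ≤ (K‖ξ‖ + d)·γ(‖μ‖)`, every mild solution satisfies
`‖x(τ)‖ ≤ M[‖x0‖ + d∫γ(‖u‖)] exp(MK∫γ(‖u‖))`. -/
theorem bilinear_apriori_bound (Tg : C0Semigroup X) (f : ℝ → X → Uv → X)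
    (M lam : ℝ) (hM : 1 ≤ M) (hlam : 0 < lam)
    (hT : ∀ t ≥ (0:ℝ), ‖Tg.T t‖ ≤ M * Real.exp (-lam * t))
    (K d : ℝ) (hK : 0 ≤ K) (hd : 0 ≤ d) (γ : ℝ → ℝ) (hγ : ClassKInf γ)
    (hbound : ∀ t ≥ (0:ℝ), ∀ (ξ : X) (μ : Uv), ‖f t ξ μ‖ ≤ (K * ‖ξ‖ + d) * γ ‖μ‖) :
    ∀ t0 ≥ (0:ℝ), ∀ u : ℝ → Uv, PWCont u → ∀ T ≥ t0, ∀ x : ℝ → X,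
      IsMild Tg f u t0 T x →
      ∀ t ∈ Icc t0 T,
        ‖x t‖ ≤ M * (‖x t0‖ + d * ∫ s in t0..t, γ ‖u s‖) *
          Real.exp (M * K * ∫ s in t0..t, γ ‖u s‖) :=
  bilinear_apriori_bound_general Tg f M lam hlam hT K d hK hd γ hγ hbound
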